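/- arXiv:2604.02984 — 5 statements merged into one kernel-verified Lean document; each statement's English description precedes it below -/
import Mathlib

section
/- Let p = (x,y,t) ∈ ℝ³ and e = (a,b,0) with a²+b² = 1. Then for every s ∈ ℝ, the Heisenberg projection π_W(p·se) equals (θ, κ(θ-θ₀)² + m(θ-θ₀) + v), where θ = (a+b)s/2 + θ₀, θ₀ = (x+y)/2, κ = (a-b)/(a+b), m = x-y, and v = t + (x²-y²)/4, provided a+b ≠ 0. In particular, the projection of the horizontal line {p·se : s ∈ ℝ} is the graph of a quadratic polynomial in θ. -/
/-- Heisenberg group multiplication on ℝ³. -/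
noncomputable def hMul (p q : ℝ × ℝ × ℝ) : ℝ × ℝ × ℝ :=
  (p.1 + q.1, p.2.1 + q.2.1, p.2.2 + q.2.2 + (p.1 * q.2.1 - q.1 * p.2.1) / 2)

/-- Heisenberg projection onto the vertical plane W = span{(1,1,0),(0,0,1)},
identified with ℝ². -/
noncomputable def piW (p : ℝ × ℝ × ℝ) : ℝ × ℝ :=
  ((p.1 + p.2.1) / 2, p.2.2 + (p.1 ^ 2 - p.2.1 ^ 2) / 4)

/-- The Heisenberg projection of a horizontal line is the graph of a quadratic:
π_W(p · se) = (θ, κ(θ-θ₀)² + m(θ-θ₀) + v) with θ = (a+b)s/2 + θ₀. -/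
theorem horizontal_line_projects_to_parabola
    (x y t a b : ℝ) (hab : a ^ 2 + b ^ 2 = 1) (hne : a + b ≠ 0) (s : ℝ) :
    piW (hMul (x, y, t) (s * a, s * b, 0)) =
      ((a + b) / 2 * s + (x + y) / 2,
        (a - b) / (a + b) * ((a + b) / 2 * s) ^ 2
          + (x - y) * ((a + b) / 2 * s) + (t + (x ^ 2 - y ^ 2) / 4)) := by
  simp only [piW, hMul, Prod.mk.injEq]
  constructor
  · ring
  · field_simp
    ring
end

section
/- Let 0 < δ ≤ t ≤ 1, let J be an interval of length √(δ/t) centered at θ, and let f, g be quadratic polynomials with |f(s)-g(s)| ≤ Cδ for all s ∈ J, where C is an absolute constant. Then |f(θ)-g(θ)| ≲ δ, |f'(θ)-g'(θ)| ≲ √(δt), and |f''(θ)-g''(θ)| ≲ t, with implied constants depending only on C. -/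
/-- Converse tangency characterization: if two quadratics stay within Cδ of each other on
the interval of length √(δ/t) centred at θ, then their 2-jets at θ are close at scales
δ, √(δt), t respectively (with constants depending only on C). -/
theorem tangency_implies_jet_closeness :
    ∀ C > (0 : ℝ), ∃ C' > (0 : ℝ), ∀ δ t θ a₁ b₁ c₁ a₂ b₂ c₂ : ℝ,
      0 < δ → δ ≤ t → t ≤ 1 →
      (∀ s ∈ Set.Icc (θ - Real.sqrt (δ / t) / 2) (θ + Real.sqrt (δ / t) / 2),
        |(a₁ * s ^ 2 + b₁ * s + c₁) - (a₂ * s ^ 2 + b₂ * s + c₂)| ≤ C * δ) →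
      |(a₁ * θ ^ 2 + b₁ * θ + c₁) - (a₂ * θ ^ 2 + b₂ * θ + c₂)| ≤ C' * δ ∧
      |(2 * a₁ * θ + b₁) - (2 * a₂ * θ + b₂)| ≤ C' * Real.sqrt (δ * t) ∧
      |2 * a₁ - 2 * a₂| ≤ C' * t := by
  intro C hC
  refine ⟨16 * C, by linarith, ?_⟩
  intro δ t θ a₁ b₁ c₁ a₂ b₂ c₂ hδ hδt ht1 hf
  have ht : 0 < t := lt_of_lt_of_le hδ hδt
  set r := Real.sqrt (δ / t) with hr
  have hrpos : 0 < r := Real.sqrt_pos.2 (div_pos hδ ht)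
  have hr2 : r ^ 2 = δ / t := Real.sq_sqrt (le_of_lt (div_pos hδ ht))
  have h0 := hf θ ⟨by linarith, by linarith⟩
  have hp := hf (θ + r / 2) ⟨by linarith, by linarith⟩
  have hm := hf (θ - r / 2) ⟨by linarith, by linarith⟩
  have hst : 0 ≤ Real.sqrt (δ * t) := Real.sqrt_nonneg _
  have hrst : r * Real.sqrt (δ * t) = δ := by
    rw [hr, ← Real.sqrt_mul (by positivity)]
    have h : δ / t * (δ * t) = δ ^ 2 := by field_simp
    rw [h, Real.sqrt_sq hδ.le]
  refine ⟨by nlinarith [h0], ?_, ?_⟩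
  · -- derivative bound
    have hid : ((2 * a₁ * θ + b₁) - (2 * a₂ * θ + b₂)) * r
        = ((a₁ * (θ + r / 2) ^ 2 + b₁ * (θ + r / 2) + c₁)
            - (a₂ * (θ + r / 2) ^ 2 + b₂ * (θ + r / 2) + c₂))
          - ((a₁ * (θ - r / 2) ^ 2 + b₁ * (θ - r / 2) + c₁)
            - (a₂ * (θ - r / 2) ^ 2 + b₂ * (θ - r / 2) + c₂)) := by ring
    have key2 : |((2 * a₁ * θ + b₁) - (2 * a₂ * θ + b₂))| * r ≤ 2 * C * δ := by
      rw [← abs_of_pos hrpos, ← abs_mul, hid]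
      calc |_ - _| ≤ |(a₁ * (θ + r / 2) ^ 2 + b₁ * (θ + r / 2) + c₁)
            - (a₂ * (θ + r / 2) ^ 2 + b₂ * (θ + r / 2) + c₂)|
          + |(a₁ * (θ - r / 2) ^ 2 + b₁ * (θ - r / 2) + c₁)
            - (a₂ * (θ - r / 2) ^ 2 + b₂ * (θ - r / 2) + c₂)| := abs_sub _ _
        _ ≤ 2 * C * δ := by linarith
    have h2 : |((2 * a₁ * θ + b₁) - (2 * a₂ * θ + b₂))| * r
        ≤ (2 * C * Real.sqrt (δ * t)) * r := by
      calc |((2 * a₁ * θ + b₁) - (2 * a₂ * θ + b₂))| * r ≤ 2 * C * δ := key2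
        _ = (2 * C * Real.sqrt (δ * t)) * r := by linear_combination (-2 * C) * hrst
    have h3 := le_of_mul_le_mul_right h2 hrpos
    nlinarith [h3]
  · -- second derivative bound
    have hdt : 0 < δ / t := div_pos hδ ht
    have hid : (a₁ - a₂) * (δ / t)
        = 2 * (((a₁ * (θ + r / 2) ^ 2 + b₁ * (θ + r / 2) + c₁)
            - (a₂ * (θ + r / 2) ^ 2 + b₂ * (θ + r / 2) + c₂))
          + ((a₁ * (θ - r / 2) ^ 2 + b₁ * (θ - r / 2) + c₁)
            - (a₂ * (θ - r / 2) ^ 2 + b₂ * (θ - r / 2) + c₂))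
          - 2 * ((a₁ * θ ^ 2 + b₁ * θ + c₁) - (a₂ * θ ^ 2 + b₂ * θ + c₂))) := by
      rw [← hr2]; ring
    have key3 : |a₁ - a₂| * (δ / t) ≤ 8 * C * δ := by
      rw [← abs_of_pos hdt, ← abs_mul, hid]
      have hb : |((a₁ * (θ + r / 2) ^ 2 + b₁ * (θ + r / 2) + c₁)
            - (a₂ * (θ + r / 2) ^ 2 + b₂ * (θ + r / 2) + c₂))
          + ((a₁ * (θ - r / 2) ^ 2 + b₁ * (θ - r / 2) + c₁)
            - (a₂ * (θ - r / 2) ^ 2 + b₂ * (θ - r / 2) + c₂))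
          - 2 * ((a₁ * θ ^ 2 + b₁ * θ + c₁) - (a₂ * θ ^ 2 + b₂ * θ + c₂))| ≤ 4 * C * δ := by
        have t1 := abs_add_le ((a₁ * (θ + r / 2) ^ 2 + b₁ * (θ + r / 2) + c₁)
            - (a₂ * (θ + r / 2) ^ 2 + b₂ * (θ + r / 2) + c₂))
          ((a₁ * (θ - r / 2) ^ 2 + b₁ * (θ - r / 2) + c₁)
            - (a₂ * (θ - r / 2) ^ 2 + b₂ * (θ - r / 2) + c₂))
        have t2 := abs_sub ((a₁ * (θ + r / 2) ^ 2 + b₁ * (θ + r / 2) + c₁)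
            - (a₂ * (θ + r / 2) ^ 2 + b₂ * (θ + r / 2) + c₂)
          + ((a₁ * (θ - r / 2) ^ 2 + b₁ * (θ - r / 2) + c₁)
            - (a₂ * (θ - r / 2) ^ 2 + b₂ * (θ - r / 2) + c₂)))
          (2 * ((a₁ * θ ^ 2 + b₁ * θ + c₁) - (a₂ * θ ^ 2 + b₂ * θ + c₂)))
        have t3 : |2 * ((a₁ * θ ^ 2 + b₁ * θ + c₁) - (a₂ * θ ^ 2 + b₂ * θ + c₂))|
            = 2 * |(a₁ * θ ^ 2 + b₁ * θ + c₁) - (a₂ * θ ^ 2 + b₂ * θ + c₂)| := by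
          rw [abs_mul]; norm_num
        linarith
      rw [abs_mul]
      norm_num
      linarith
    have h4 : |a₁ - a₂| * (δ / t) ≤ (8 * C * t) * (δ / t) := by
      calc |a₁ - a₂| * (δ / t) ≤ 8 * C * δ := key3
        _ = (8 * C * t) * (δ / t) := by field_simp
    have h5 := le_of_mul_le_mul_right h4 hdt
    have h6 : |2 * a₁ - 2 * a₂| = 2 * |a₁ - a₂| := by
      rw [show (2 * a₁ - 2 * a₂) = 2 * (a₁ - a₂) by ring, abs_mul]; norm_num
    rw [h6]; linarith
end

section
/- Let h be a quadratic polynomial, let I = [-10,10], let δ, t > 0 with δ ≤ t ≤ 1, and suppose there exists θ ∈ I with |h(θ)| ≤ δ, and that |h''| ≤ Ct, and |h'(s)| ≤ C√(δt) and |h(s)| ≤ Cδ for all s in an interval J ⊆ I of length √(δ/t) containing θ. Then |h'(s)| ≲ t and |h(s)| ≲ t for all s ∈ I, i.e. sup_{s∈I}(|h(s)|+|h'(s)|+|h''(s)|) ≲ t. -/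
/-- If a quadratic h is small (at the tangency scales) on a subinterval J of length
√(δ/t) of I = [-10,10] containing a point θ where |h(θ)| ≤ δ, and |h''| ≤ Ct, then
|h| + |h'| + |h''| ≲ t on all of I. -/
theorem tangent_quadratics_tau_bound :
    ∀ C > (0 : ℝ), ∃ C' > (0 : ℝ), ∀ a b c δ t θ u v : ℝ,
      0 < δ → δ ≤ t → t ≤ 1 →
      θ ∈ Set.Icc (-10 : ℝ) 10 →
      θ ∈ Set.Icc u v → Set.Icc u v ⊆ Set.Icc (-10 : ℝ) 10 →
      v - u = Real.sqrt (δ / t) →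
      |a * θ ^ 2 + b * θ + c| ≤ δ →
      |2 * a| ≤ C * t →
      (∀ s ∈ Set.Icc u v, |2 * a * s + b| ≤ C * Real.sqrt (δ * t)) →
      (∀ s ∈ Set.Icc u v, |a * s ^ 2 + b * s + c| ≤ C * δ) →
      ∀ s ∈ Set.Icc (-10 : ℝ) 10,
        |a * s ^ 2 + b * s + c| + |2 * a * s + b| + |2 * a| ≤ C' * t := by
  intro C hC
  refine ⟨1000 * (C + 1), by positivity, ?_⟩
  intro a b c δ t θ u v hδ hδt ht hθI hθJ hJ hlen hθδ ha hb' hc' s hs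
  have ht0 : (0:ℝ) < t := lt_of_lt_of_le hδ hδt
  have hbθ : |2 * a * θ + b| ≤ C * Real.sqrt (δ * t) := hb' θ hθJ
  have hsqrt : Real.sqrt (δ * t) ≤ t := by
    have h := Real.sqrt_le_sqrt (show δ * t ≤ t * t by nlinarith)
    rwa [Real.sqrt_mul_self ht0.le] at h
  have hbθ' : |2 * a * θ + b| ≤ C * t := hbθ.trans (by nlinarith)
  have ha2 : |2 * a| = 2 * |a| := by rw [abs_mul]; norm_num
  have ha' : |a| ≤ C * t / 2 := by rw [ha2] at ha; linarith
  have hsθ : |s - θ| ≤ 20 := by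
    rw [abs_sub_le_iff]
    obtain ⟨h1, h2⟩ := hs; obtain ⟨h3, h4⟩ := hθI
    constructor <;> linarith
  have t1 : |(s - θ) * (2 * a * θ + b)| ≤ 20 * (C * t) := by
    rw [abs_mul]
    exact mul_le_mul hsθ hbθ' (abs_nonneg _) (by norm_num)
  have h400 : |(s - θ) ^ 2| ≤ 400 := by
    rw [abs_pow]; nlinarith [abs_nonneg (s - θ)]
  have t2 : |a * (s - θ) ^ 2| ≤ (C * t / 2) * 400 := by
    rw [abs_mul]
    exact mul_le_mul ha' h400 (abs_nonneg _) (by positivity)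
  have h1 : |a * s ^ 2 + b * s + c| ≤ δ + 20 * (C * t) + (C * t / 2) * 400 := by
    have key : a * s ^ 2 + b * s + c
        = (a * θ ^ 2 + b * θ + c) + (s - θ) * (2 * a * θ + b) + a * (s - θ) ^ 2 := by
      ring
    rw [key]
    calc |(a * θ ^ 2 + b * θ + c) + (s - θ) * (2 * a * θ + b) + a * (s - θ) ^ 2|
        ≤ |(a * θ ^ 2 + b * θ + c) + (s - θ) * (2 * a * θ + b)| + |a * (s - θ) ^ 2| :=
          abs_add_le _ _
      _ ≤ |a * θ ^ 2 + b * θ + c| + |(s - θ) * (2 * a * θ + b)| + |a * (s - θ) ^ 2| := by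
          linarith [abs_add_le (a * θ ^ 2 + b * θ + c) ((s - θ) * (2 * a * θ + b))]
      _ ≤ δ + 20 * (C * t) + (C * t / 2) * 400 := by linarith
  have t3 : |2 * a * (s - θ)| ≤ (C * t) * 20 := by
    rw [show 2 * a * (s - θ) = (2 * a) * (s - θ) by ring, abs_mul]
    exact mul_le_mul ha hsθ (abs_nonneg _) (by positivity)
  have h2 : |2 * a * s + b| ≤ C * t + (C * t) * 20 := by
    have key : 2 * a * s + b = (2 * a * θ + b) + 2 * a * (s - θ) := by ring
    rw [key]
    calc |(2 * a * θ + b) + 2 * a * (s - θ)|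
        ≤ |2 * a * θ + b| + |2 * a * (s - θ)| := abs_add_le _ _
      _ ≤ C * t + (C * t) * 20 := by linarith
  nlinarith [mul_pos hC ht0]
end

section
/- Let δ > 0 and let p = (s₀, y₀) ∈ [0,1]² with |s₀| ≥ δ/2. Let F be a set of triples (a,b,c) ∈ B(0,1) ⊆ ℝ³ that is δ-separated in the Euclidean metric, and suppose each (a,b,c) ∈ F satisfies |a s₀² + b s₀ + c - y₀| ≤ δ. Then #F ≲ δ⁻², with an absolute implied constant. -/
/-- Euclidean distance on coefficient triples. -/
noncomputable def eDist3 (f g : ℝ × ℝ × ℝ) : ℝ :=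
  Real.sqrt ((f.1 - g.1) ^ 2 + (f.2.1 - g.2.1) ^ 2 + (f.2.2 - g.2.2) ^ 2)

lemma eDist3_sq_le {f g : ℝ × ℝ × ℝ} {δ : ℝ} (hδ : 0 ≤ δ) (h : δ ≤ eDist3 f g) :
    δ ^ 2 ≤ (f.1 - g.1) ^ 2 + (f.2.1 - g.2.1) ^ 2 + (f.2.2 - g.2.2) ^ 2 := by
  unfold eDist3 at h
  have hnn : (0:ℝ) ≤ (f.1 - g.1) ^ 2 + (f.2.1 - g.2.1) ^ 2 + (f.2.2 - g.2.2) ^ 2 := by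
    positivity
  exact (Real.le_sqrt hδ hnn).mp h

lemma eDist3_ball {f : ℝ × ℝ × ℝ} (h : eDist3 f 0 ≤ 1) :
    f.1 ^ 2 + f.2.1 ^ 2 + f.2.2 ^ 2 ≤ 1 := by
  unfold eDist3 at h
  have := (Real.sqrt_le_left (by norm_num : (0:ℝ) ≤ 1)).mp h
  simpa using this

lemma floor_eq_abs_sub_lt {x y : ℝ} (h : ⌊x⌋ = ⌊y⌋) : |x - y| < 1 := by
  have h1 : (⌊x⌋ : ℝ) ≤ x := Int.floor_le x
  have h2 : x < ⌊x⌋ + 1 := Int.lt_floor_add_one x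
  have h3 : (⌊y⌋ : ℝ) ≤ y := Int.floor_le y
  have h4 : y < ⌊y⌋ + 1 := Int.lt_floor_add_one y
  rw [h] at h1 h2
  rw [abs_sub_lt_iff]
  constructor <;> linarith

set_option maxHeartbeats 1000000 in
/-- A δ-separated (in the Euclidean metric) set of coefficient triples in the unit ball
whose quadratics all pass within δ of a fixed point (s₀,y₀) with |s₀| ≥ δ/2 has
cardinality ≲ δ⁻². -/
theorem multiplicity_bound :
    ∃ C > (0 : ℝ), ∀ (δ s₀ y₀ : ℝ) (F : Finset (ℝ × ℝ × ℝ)),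
      0 < δ → (s₀, y₀) ∈ Set.Icc (0 : ℝ) 1 ×ˢ Set.Icc (0 : ℝ) 1 → δ / 2 ≤ |s₀| →
      (∀ f ∈ F, eDist3 f 0 ≤ 1) →
      (∀ f ∈ F, ∀ g ∈ F, f ≠ g → δ ≤ eDist3 f g) →
      (∀ f ∈ F, |f.1 * s₀ ^ 2 + f.2.1 * s₀ + f.2.2 - y₀| ≤ δ) →
      (F.card : ℝ) ≤ C * δ⁻¹ ^ 2 := by
  refine ⟨1584, by norm_num, ?_⟩
  intro δ s₀ y₀ F hδ hp hs hball hsep hslab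
  have hs0 : 0 ≤ s₀ := hp.1.1
  have hs1 : s₀ ≤ 1 := hp.1.2
  have habs : |s₀| = s₀ := abs_of_nonneg hs0
  have hδ2 : δ ≤ 2 := by rw [habs] at hs; linarith
  have hsq1 : s₀ ^ 2 ≤ 1 := by nlinarith
  set u : ℝ × ℝ × ℝ → ℝ := fun f => f.1 * s₀ ^ 2 + f.2.1 * s₀ + f.2.2 with hu
  set φ : ℝ × ℝ × ℝ → ℤ × ℤ × ℤ :=
    fun f => (⌊4 * f.1 / δ⌋, ⌊4 * f.2.1 / δ⌋, ⌊4 * u f / δ⌋) with hφ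
  -- floor coincidence implies closeness
  have key : ∀ x y : ℝ, ⌊4 * x / δ⌋ = ⌊4 * y / δ⌋ → |x - y| < δ / 4 := by
    intro x y h
    have h1 : |4 * x / δ - 4 * y / δ| < 1 := floor_eq_abs_sub_lt h
    have h2 : 4 * x / δ - 4 * y / δ = 4 * (x - y) / δ := by ring
    rw [h2, abs_div, abs_of_pos hδ, div_lt_one hδ, abs_mul] at h1
    have h3 : |(4 : ℝ)| = 4 := by norm_num
    rw [h3] at h1
    linarith
  -- injectivity of φ on F
  have hinj : Set.InjOn φ F := by
    intro f hf g hg hfg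
    by_contra hne
    have hsep' := hsep f hf g hg hne
    obtain ⟨e1, e2, e3⟩ : ⌊4 * f.1 / δ⌋ = ⌊4 * g.1 / δ⌋ ∧
        ⌊4 * f.2.1 / δ⌋ = ⌊4 * g.2.1 / δ⌋ ∧ ⌊4 * u f / δ⌋ = ⌊4 * u g / δ⌋ := by
      simpa [hφ, Prod.ext_iff] using hfg
    have h1 := abs_lt.mp (key _ _ e1)
    have h2 := abs_lt.mp (key _ _ e2)
    have h3 := abs_lt.mp (key _ _ e3)
    have hA1 : (f.1 - g.1) * s₀ ^ 2 ≤ δ / 4 := by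
      have t1 := mul_le_mul_of_nonneg_right h1.2.le (sq_nonneg s₀)
      have t2 := mul_le_mul_of_nonneg_left hsq1 (by linarith : (0:ℝ) ≤ δ / 4)
      linarith
    have hA2 : -(δ / 4) ≤ (f.1 - g.1) * s₀ ^ 2 := by
      have t1 := mul_le_mul_of_nonneg_right h1.1.le (sq_nonneg s₀)
      have t2 := mul_le_mul_of_nonneg_left hsq1 (by linarith : (0:ℝ) ≤ δ / 4)
      linarith
    have hB1 : (f.2.1 - g.2.1) * s₀ ≤ δ / 4 := by
      have t1 := mul_le_mul_of_nonneg_right h2.2.le hs0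
      have t2 := mul_le_mul_of_nonneg_left hs1 (by linarith : (0:ℝ) ≤ δ / 4)
      linarith
    have hB2 : -(δ / 4) ≤ (f.2.1 - g.2.1) * s₀ := by
      have t1 := mul_le_mul_of_nonneg_right h2.1.le hs0
      have t2 := mul_le_mul_of_nonneg_left hs1 (by linarith : (0:ℝ) ≤ δ / 4)
      linarith
    have hcc : f.2.2 - g.2.2 =
        (u f - u g) - (f.1 - g.1) * s₀ ^ 2 - (f.2.1 - g.2.1) * s₀ := by
      simp only [hu]; ring
    have hc1 : f.2.2 - g.2.2 < 3 * δ / 4 := by rw [hcc]; linarith [h3.2]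
    have hc2 : -(3 * δ / 4) < f.2.2 - g.2.2 := by rw [hcc]; linarith [h3.1]
    have hnn : (0:ℝ) ≤ (f.1 - g.1) ^ 2 + (f.2.1 - g.2.1) ^ 2 + (f.2.2 - g.2.2) ^ 2 := by
      positivity
    have hS : δ ^ 2 ≤ (f.1 - g.1) ^ 2 + (f.2.1 - g.2.1) ^ 2 + (f.2.2 - g.2.2) ^ 2 :=
      eDist3_sq_le hδ.le hsep'
    have q1 : (f.1 - g.1) ^ 2 < (δ / 4) ^ 2 := sq_lt_sq' h1.1 h1.2
    have q2 : (f.2.1 - g.2.1) ^ 2 < (δ / 4) ^ 2 := sq_lt_sq' h2.1 h2.2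
    have q3 : (f.2.2 - g.2.2) ^ 2 < (3 * δ / 4) ^ 2 := sq_lt_sq' hc2 hc1
    linarith [q1, q2, q3, hS, sq_nonneg δ]
  -- the box containing the image
  have hsub : F.image φ ⊆
      (Finset.Icc ⌊-4 / δ⌋ ⌊4 / δ⌋) ×ˢ (Finset.Icc ⌊-4 / δ⌋ ⌊4 / δ⌋) ×ˢ
        (Finset.Icc (⌊4 * y₀ / δ⌋ - 5) (⌊4 * y₀ / δ⌋ + 5)) := by
    intro z hz
    obtain ⟨f, hf, rfl⟩ := Finset.mem_image.mp hz
    simp only [hφ]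
    have hb2 : f.1 ^ 2 + f.2.1 ^ 2 + f.2.2 ^ 2 ≤ 1 := eDist3_ball (hball f hf)
    have ha1 : -1 ≤ f.1 := by
      linarith [sq_nonneg (f.1 + 1), sq_nonneg f.2.1, sq_nonneg f.2.2]
    have ha2 : f.1 ≤ 1 := by
      linarith [sq_nonneg (f.1 - 1), sq_nonneg f.2.1, sq_nonneg f.2.2]
    have hb1 : -1 ≤ f.2.1 := by
      linarith [sq_nonneg (f.2.1 + 1), sq_nonneg f.1, sq_nonneg f.2.2]
    have hb1' : f.2.1 ≤ 1 := by
      linarith [sq_nonneg (f.2.1 - 1), sq_nonneg f.1, sq_nonneg f.2.2]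
    have hsl := abs_le.mp (hslab f hf)
    have hcoord : ∀ x : ℝ, -1 ≤ x → x ≤ 1 → ⌊4 * x / δ⌋ ∈ Finset.Icc ⌊-4 / δ⌋ ⌊4 / δ⌋ := by
      intro x hx1 hx2
      rw [Finset.mem_Icc]
      refine ⟨Int.floor_le_floor ?_, Int.floor_le_floor ?_⟩
      · rw [div_le_div_iff₀ hδ hδ]
        linarith [mul_le_mul_of_nonneg_right hx1 hδ.le]
      · rw [div_le_div_iff₀ hδ hδ]
        linarith [mul_le_mul_of_nonneg_right hx2 hδ.le]
    refine Finset.mem_product.mpr ⟨hcoord _ ha1 ha2, Finset.mem_product.mpr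
      ⟨hcoord _ hb1 hb1', ?_⟩⟩
    rw [Finset.mem_Icc]
    have hy : (⌊4 * y₀ / δ⌋ : ℝ) ≤ 4 * y₀ / δ := Int.floor_le _
    have hy' : 4 * y₀ / δ < ⌊4 * y₀ / δ⌋ + 1 := Int.lt_floor_add_one _
    have hyd : 4 * y₀ / δ * δ = 4 * y₀ := div_mul_cancel₀ _ hδ.ne'
    have husl1 : -δ ≤ u f - y₀ := hsl.1
    have husl2 : u f - y₀ ≤ δ := hsl.2
    constructor
    · rw [Int.le_floor]
      push_cast
      rw [le_div_iff₀ hδ]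
      linarith [mul_le_mul_of_nonneg_right hy hδ.le, hyd, husl1, hδ]
    · have hlt : ⌊4 * u f / δ⌋ < ⌊4 * y₀ / δ⌋ + 6 := by
        rw [Int.floor_lt]
        push_cast
        rw [div_lt_iff₀ hδ]
        linarith [mul_lt_mul_of_pos_right hy' hδ, hyd, husl2, hδ]
      show ⌊4 * u f / δ⌋ ≤ ⌊4 * y₀ / δ⌋ + 5
      omega
  -- count
  have hcard1 : F.card = (F.image φ).card := (Finset.card_image_of_injOn hinj).symm
  have hcard2 := Finset.card_le_card hsub
  have hboxcard : ((Finset.Icc ⌊-4 / δ⌋ ⌊4 / δ⌋) ×ˢ (Finset.Icc ⌊-4 / δ⌋ ⌊4 / δ⌋) ×ˢ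
        (Finset.Icc (⌊4 * y₀ / δ⌋ - 5) (⌊4 * y₀ / δ⌋ + 5))).card
      = (⌊4 / δ⌋ + 1 - ⌊-4 / δ⌋).toNat * ((⌊4 / δ⌋ + 1 - ⌊-4 / δ⌋).toNat * 11) := by
    rw [Finset.card_product, Finset.card_product, Int.card_Icc, Int.card_Icc]
    congr 2
    omega
  -- numeric bound
  have hfl1 : (⌊4 / δ⌋ : ℝ) ≤ 4 / δ := Int.floor_le _
  have hfl2 : -4 / δ < ⌊-4 / δ⌋ + 1 := Int.lt_floor_add_one _
  have hmono : ⌊-4 / δ⌋ ≤ ⌊4 / δ⌋ := by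
    apply Int.floor_le_floor
    rw [div_le_div_iff₀ hδ hδ]; linarith
  have hNnn : (0 : ℤ) ≤ ⌊4 / δ⌋ + 1 - ⌊-4 / δ⌋ := by omega
  have hAeq : (((⌊4 / δ⌋ + 1 - ⌊-4 / δ⌋).toNat : ℝ))
      = ((⌊4 / δ⌋ : ℝ) + 1 - (⌊-4 / δ⌋ : ℝ)) := by
    rw [← Int.cast_natCast, Int.toNat_of_nonneg hNnn]
    push_cast; ring
  have h4δ : (2 : ℝ) ≤ 4 / δ := by rw [le_div_iff₀ hδ]; linarith
  have hA : ((⌊4 / δ⌋ + 1 - ⌊-4 / δ⌋).toNat : ℝ) ≤ 12 / δ := by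
    rw [hAeq]
    have hnegeq : (-4:ℝ)/δ = -(4/δ) := by ring
    have h12eq : (12:ℝ)/δ = 3*(4/δ) := by ring
    linarith [hfl1, hfl2, h4δ, hnegeq, h12eq]
  have hA0 : (0 : ℝ) ≤ ((⌊4 / δ⌋ + 1 - ⌊-4 / δ⌋).toNat : ℝ) := Nat.cast_nonneg _
  have h12 : (0:ℝ) < 12 / δ := by positivity
  calc (F.card : ℝ) = ((F.image φ).card : ℝ) := by rw [hcard1]
    _ ≤ (((Finset.Icc ⌊-4 / δ⌋ ⌊4 / δ⌋) ×ˢ (Finset.Icc ⌊-4 / δ⌋ ⌊4 / δ⌋) ×ˢ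
        (Finset.Icc (⌊4 * y₀ / δ⌋ - 5) (⌊4 * y₀ / δ⌋ + 5))).card : ℝ) := by
        exact_mod_cast hcard2
    _ = ((⌊4 / δ⌋ + 1 - ⌊-4 / δ⌋).toNat : ℝ) * (((⌊4 / δ⌋ + 1 - ⌊-4 / δ⌋).toNat : ℝ) * 11) := by
        rw [hboxcard]; push_cast; ring
    _ ≤ (12 / δ) * ((12 / δ) * 11) := by nlinarith [hA, hA0, h12]
    _ = 1584 * δ⁻¹ ^ 2 := by field_simp; ring
end

section
/- Clamshell counting constraint: let 0 < δ ≤ t ≤ 1 and let μ, N be positive integers with μ ∼ t/δ and μ ≤ N ≤ δ⁻¹. Suppose ν ≥ 1 and the inequality μ^{3/4}ν^{3/4}·#𝓡 ≤ C·N^{3/4}(#𝓡·ν)^{3/4} holds with #𝓡 = δ^{-1/2}N/μ^{3/2}. Then μ ≤ C' δ^{1/3} N^{4/3} for a constant C' depending only on C. Moreover, if additionally μ ≤ C t^α N = C δ^α μ^α N, then combining the two bounds for all admissible δ, N forces α ≥ 1/4. -/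
/-- Arithmetic content of the clamshell sharpness example: (i) the bilinear rectangle
count forces μ ≲ δ^{1/3}N^{4/3}; (ii) compatibility of the broadness bound
μ ≲ δ^{α/(1-α)} N^{1/(1-α)} with this for all admissible δ, N forces α ≥ 1/4. -/
theorem clamshell_counting_constraint :
    ∀ C > (0 : ℝ),
      (∃ C' > (0 : ℝ), ∀ δ t μ N ν R : ℝ,
        0 < δ → δ ≤ t → t ≤ 1 →
        t / δ ≤ μ → μ ≤ 2 * (t / δ) → μ ≤ N → N ≤ δ⁻¹ → 1 ≤ ν →
        R = δ ^ (-(1 : ℝ) / 2) * N / μ ^ ((3 : ℝ) / 2) →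
        μ ^ ((3 : ℝ) / 4) * ν ^ ((3 : ℝ) / 4) * R ≤
          C * N ^ ((3 : ℝ) / 4) * (R * ν) ^ ((3 : ℝ) / 4) →
        μ ≤ C' * δ ^ ((1 : ℝ) / 3) * N ^ ((4 : ℝ) / 3)) ∧
      (∀ α : ℝ, 0 ≤ α → α < 1 →
        (∃ K > (0 : ℝ), ∀ δ N : ℝ, 0 < δ → δ < 1 → 1 ≤ N → N ≤ δ⁻¹ →
          δ ^ (α / (1 - α)) * N ^ (1 / (1 - α)) ≤
            K * δ ^ ((1 : ℝ) / 3) * N ^ ((4 : ℝ) / 3)) →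
        (1 : ℝ) / 4 ≤ α) := by
  intro C hC
  constructor
  · -- Part (i)
    refine ⟨C ^ ((8 : ℝ) / 3), Real.rpow_pos_of_pos hC _, ?_⟩
    intro δ t μ N ν R hδ hδt ht1 htδμ hμ2 hμN hNδ hν hR hIneq
    have hμ1 : (1 : ℝ) ≤ μ := le_trans ((one_le_div hδ).2 hδt) htδμ
    have hμ : (0 : ℝ) < μ := lt_of_lt_of_le one_pos hμ1
    have hN : (0 : ℝ) < N := lt_of_lt_of_le hμ hμN
    have hν0 : (0 : ℝ) < ν := lt_of_lt_of_le one_pos hν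
    have hRpos : (0 : ℝ) < R := by
      rw [hR]
      positivity
    have hlR : Real.log R = (-(1 : ℝ) / 2) * Real.log δ + Real.log N
        - (3 : ℝ) / 2 * Real.log μ := by
      rw [hR, Real.log_div (by positivity) (by positivity),
        Real.log_mul (by positivity) (by positivity),
        Real.log_rpow hδ, Real.log_rpow hμ]
    have hlog : (3 : ℝ) / 4 * Real.log μ + (3 : ℝ) / 4 * Real.log ν + Real.log R ≤
        Real.log C + (3 : ℝ) / 4 * Real.log N
          + (3 : ℝ) / 4 * (Real.log R + Real.log ν) := by
      have h1 : Real.log (μ ^ ((3 : ℝ) / 4) * ν ^ ((3 : ℝ) / 4) * R) ≤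
          Real.log (C * N ^ ((3 : ℝ) / 4) * (R * ν) ^ ((3 : ℝ) / 4)) :=
        Real.log_le_log (by positivity) hIneq
      rw [Real.log_mul (by positivity) (by positivity),
        Real.log_mul (by positivity) (by positivity),
        Real.log_mul (by positivity) (by positivity),
        Real.log_mul (by positivity) (by positivity),
        Real.log_rpow hμ, Real.log_rpow hν0, Real.log_rpow hN,
        Real.log_rpow (by positivity)] at h1
      rw [Real.log_mul (by positivity) (by positivity)] at h1
      linarith [h1]
    have hgoal : Real.log μ ≤ (8 : ℝ) / 3 * Real.log C + (1 : ℝ) / 3 * Real.log δ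
        + (4 : ℝ) / 3 * Real.log N := by
      rw [hlR] at hlog
      linarith
    have : Real.log μ ≤
        Real.log (C ^ ((8 : ℝ) / 3) * δ ^ ((1 : ℝ) / 3) * N ^ ((4 : ℝ) / 3)) := by
      rw [Real.log_mul (by positivity) (by positivity),
        Real.log_mul (by positivity) (by positivity),
        Real.log_rpow hC, Real.log_rpow hδ, Real.log_rpow hN]
      linarith
    exact (Real.log_le_log_iff hμ (by positivity)).1 this
  · -- Part (ii)
    intro α hα0 hα1 ⟨K, hK, hKall⟩
    by_contra h
    push_neg at h
    have he : (0 : ℝ) < (1 - 4 * α) / 3 := by linarith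
    set e := (1 - 4 * α) / 3 with hedef
    set x := (2 * K) ^ (-(1 : ℝ) / e) with hxdef
    have hx : (0 : ℝ) < x := Real.rpow_pos_of_pos (by linarith) _
    set δ := min (1 / 2 : ℝ) x with hδdef
    have hδ : (0 : ℝ) < δ := lt_min (by norm_num) hx
    have hδ1 : δ < 1 := lt_of_le_of_lt (min_le_left _ _) (by norm_num)
    have hδe : K * δ ^ e ≤ 1 / 2 := by
      have h1 : δ ^ e ≤ x ^ e :=
        Real.rpow_le_rpow hδ.le (min_le_right _ _) he.le
      have h2 : x ^ e = (2 * K)⁻¹ := by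
        rw [hxdef, ← Real.rpow_mul (by linarith : (0:ℝ) ≤ 2 * K),
          show -(1 : ℝ) / e * e = -1 by field_simp, Real.rpow_neg_one]
      have : K * δ ^ e ≤ K * (2 * K)⁻¹ := by
        rw [← h2]; exact mul_le_mul_of_nonneg_left h1 hK.le
      calc K * δ ^ e ≤ K * (2 * K)⁻¹ := this
        _ = 1 / 2 := by field_simp
    set N := δ ^ (-α) with hNdef
    have hN1 : (1 : ℝ) ≤ N :=
      Real.one_le_rpow_of_pos_of_le_one_of_nonpos hδ hδ1.le (by linarith)
    have hNδ : N ≤ δ⁻¹ := by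
      rw [hNdef, ← Real.rpow_neg_one δ]
      exact Real.rpow_le_rpow_of_exponent_ge hδ hδ1.le (by linarith)
    have hmain := hKall δ N hδ hδ1 hN1 hNδ
    have hLHS : δ ^ (α / (1 - α)) * N ^ (1 / (1 - α)) = 1 := by
      rw [hNdef, ← Real.rpow_mul hδ.le, ← Real.rpow_add hδ]
      rw [show α / (1 - α) + -α * (1 / (1 - α)) = 0 by ring]
      exact Real.rpow_zero δ
    have hRHS : K * δ ^ ((1 : ℝ) / 3) * N ^ ((4 : ℝ) / 3) = K * δ ^ e := by
      rw [hNdef, ← Real.rpow_mul hδ.le, mul_assoc, ← Real.rpow_add hδ]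
      rw [show (1 : ℝ) / 3 + -α * ((4 : ℝ) / 3) = e by rw [hedef]; ring]
    rw [hLHS, hRHS] at hmain
    linarith
end
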